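/- arXiv:2504.16642 — 3 statements merged into one kernel-verified Lean document; each statement's English description precedes it below -/
import Mathlib

section
/- Let A : ℝ^p → ℝ^(m×d) and b : ℝ^p → ℝ^m be affine maps and P(ω) = {x ∈ ℝ^d : A(ω)x ≤ b(ω)}. For any subset Λ ⊆ ℝ^p, the common intersection ⋂_{ω ∈ Λ} P(ω) equals ⋂_{ω ∈ conv(Λ)} P(ω), where conv(Λ) denotes the convex hull of Λ. -/
/-! The set of parameters `ω` for which a fixed `x` satisfies `A(ω) x ≤ b(ω)` is convex, because
`ω ↦ b(ω) - A(ω) x` is affine. So if `x` lies in `P(ω)` for all `ω ∈ Λ`, it does so for all `ω` in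
the convex hull of `Λ`. -/

open Set Matrix

section

variable {𝕜 E F : Type*} [Ring 𝕜] [PartialOrder 𝕜]
  [AddCommGroup E] [Module 𝕜 E]

theorem biInter_convexHull_eq_biInter {X : Type*} {P : E → Set X}
    (hP : ∀ x, Convex 𝕜 {ω | x ∈ P ω}) (Λ : Set E) :
    ⋂ ω ∈ convexHull 𝕜 Λ, P ω = ⋂ ω ∈ Λ, P ω := by
  refine (biInter_mono (subset_convexHull 𝕜 Λ) fun _ _ ↦ subset_rfl).antisymm fun x hx ↦ ?_
  rw [mem_iInter₂] at hx ⊢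
  exact fun ω hω ↦ convexHull_min hx (hP x) hω

theorem AffineMap.convex_setOf_le [AddCommGroup F] [PartialOrder F] [IsOrderedAddMonoid F]
    [Module 𝕜 F] [PosSMulMono 𝕜 F] (f g : E →ᵃ[𝕜] F) : Convex 𝕜 {ω | f ω ≤ g ω} := by
  have h : {ω | f ω ≤ g ω} = (g - f) ⁻¹' Ici 0 := by
    ext ω
    simp [sub_nonneg]
  exact h ▸ (convex_Ici 0).affine_preimage (g - f)

end

theorem convex_setOf_mulVec_le {R E m n : Type*} [CommRing R] [PartialOrder R] [IsOrderedRing R]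
    [AddCommGroup E] [Module R E] [Fintype n] (A : E →ᵃ[R] Matrix m n R)
    (b : E →ᵃ[R] (m → R)) (x : n → R) : Convex R {ω | A ω *ᵥ x ≤ b ω} :=
  (((mulVecBilin R R).flip x).toAffineMap.comp A).convex_setOf_le b

/-- The common intersection of an affine family of polyhedra over a
parameter set `Λ` equals the common intersection over the convex hull of `Λ`. -/
theorem inter_eq_inter_convexHull (p m d : ℕ)
    (A : (Fin p → ℝ) →ᵃ[ℝ] Matrix (Fin m) (Fin d) ℝ)
    (b : (Fin p → ℝ) →ᵃ[ℝ] (Fin m → ℝ))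
    (P : (Fin p → ℝ) → Set (Fin d → ℝ))
    (hP : ∀ ω, P ω = {x | (A ω).mulVec x ≤ b ω})
    (Λ : Set (Fin p → ℝ)) :
    ⋂ ω ∈ Λ, P ω = ⋂ ω ∈ convexHull ℝ Λ, P ω := by
  obtain rfl : P = fun ω ↦ {x | A ω *ᵥ x ≤ b ω} := funext hP
  exact (biInter_convexHull_eq_biInter (convex_setOf_mulVec_le A b) Λ).symm
end

section
/- Let A : ℝ^p → ℝ^(m×d) and b : ℝ^p → ℝ^m be affine maps and P(ω) = {x ∈ ℝ^d : A(ω)x ≤ b(ω)}. If Λ ⊆ ℝ^p is bounded, then ⋂_{ω ∈ Λ} P(ω) = ⋂_{ω ∈ ext(closure(conv(Λ)))} P(ω), where ext(C) denotes the set of extreme points of C. -/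
/-- For a bounded parameter set `Λ`, the common intersection of an
affine family of polyhedra over `Λ` equals the common intersection over the
extreme points of the closed convex hull of `Λ`. -/
theorem inter_eq_inter_extremePoints (p m d : ℕ)
    (A : (Fin p → ℝ) →ᵃ[ℝ] Matrix (Fin m) (Fin d) ℝ)
    (b : (Fin p → ℝ) →ᵃ[ℝ] (Fin m → ℝ))
    (P : (Fin p → ℝ) → Set (Fin d → ℝ))
    (hP : ∀ ω, P ω = {x | (A ω).mulVec x ≤ b ω})
    (Λ : Set (Fin p → ℝ)) (hΛ : Bornology.IsBounded Λ) :
    ⋂ ω ∈ Λ, P ω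
      = ⋂ ω ∈ Set.extremePoints ℝ (closure (convexHull ℝ Λ)), P ω := by
  set K := closure (convexHull ℝ Λ) with hK
  have hKconv : Convex ℝ K := (convex_convexHull ℝ Λ).closure
  have hKcomp : IsCompact K := by
    have : Bornology.IsBounded K := (isBounded_convexHull.2 hΛ).closure
    exact Metric.isCompact_of_isClosed_isBounded isClosed_closure this
  have hΛK : Λ ⊆ K := (subset_convexHull ℝ Λ).trans subset_closure
  -- For fixed x, the set of ω with x ∈ P ω is closed and convex.
  ext x
  simp only [Set.mem_iInter]
  have key : ∀ S : Set (Fin p → ℝ),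
      S = {ω | x ∈ P ω} → IsClosed S ∧ Convex ℝ S := by
    intro S hS
    have hSdef : S = ⋂ i : Fin m, {ω | (A ω).mulVec x i ≤ b ω i} := by
      ext ω
      simp [hS, hP ω, Pi.le_def, Set.mem_iInter]
    constructor
    · rw [hSdef]
      refine isClosed_iInter fun i => isClosed_le ?_ ?_
      · have : (fun ω => (A ω).mulVec x i) = fun ω => ∑ j, A ω i j * x j := by
          funext ω; rfl
        rw [this]
        exact continuous_finset_sum _ fun j _ =>
          (Continuous.mul (f := fun ω => A ω i j) (g := fun _ => x j) ((continuous_apply j).comp ((continuous_apply i).comp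
            (((Matrix.ofLinearEquiv ℝ).symm.toLinearMap.toAffineMap.comp A).continuous_of_finiteDimensional :))) continuous_const)
      · exact (continuous_apply i).comp b.continuous_of_finiteDimensional
    · rw [hSdef]
      refine convex_iInter fun i => ?_
      intro ω₁ h₁ ω₂ h₂ a c ha hc hac
      simp only [Set.mem_setOf_eq] at h₁ h₂ ⊢
      rw [Convex.combo_affine_apply hac, Convex.combo_affine_apply hac]
      have hA : ((a • A ω₁ + c • A ω₂ : Matrix (Fin m) (Fin d) ℝ)).mulVec x
          = a • (A ω₁).mulVec x + c • (A ω₂).mulVec x := by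
        rw [Matrix.add_mulVec, Matrix.smul_mulVec, Matrix.smul_mulVec]
      rw [hA]
      simp only [Pi.add_apply, Pi.smul_apply, smul_eq_mul]
      have := add_le_add (mul_le_mul_of_nonneg_left h₁ ha)
        (mul_le_mul_of_nonneg_left h₂ hc)
      exact this
  obtain ⟨hcl, hconv⟩ := key {ω | x ∈ P ω} rfl
  constructor
  · intro h ω hω
    have hKsub : K ⊆ {ω | x ∈ P ω} :=
      closure_minimal (convexHull_min (fun ω' hω' => h ω' hω') hconv) hcl
    exact hKsub (extremePoints_subset hω)
  · intro h ω hω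
    have : closure (convexHull ℝ (K.extremePoints ℝ)) ⊆ {ω' | x ∈ P ω'} :=
      closure_minimal (convexHull_min (fun ω' hω' => h ω' hω') hconv) hcl
    rw [closure_convexHull_extremePoints hKcomp hKconv] at this
    exact this (hΛK hω)
end

section
/- Let P([α,β]) be an affine family of polytopes (each P(ω) compact) in ℝ^d with parameter interval [α,β] ⊂ ℝ. For λ ∈ [α,β] define σ_P(λ) = sup({λ} ∪ {ν ∈ [α,β] : ∃ x ∈ ℝ^d with [λ,ν] ⊆ P*(x)}), where P*(x) = {ω : x ∈ P(ω)}. Then for every λ ∈ [α,β], either P(λ) = ∅ or there exists x_λ ∈ ℝ^d such that [λ, σ_P(λ)] ⊆ P*(x_λ); that is, the supremum defining σ_P(λ) is attained. -/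
/-!
Let `K ν = ⋂_{ω ∈ [λ, ν]} P(ω)` for the `ν` in the set defining `σ_P(λ)`. These are
nonempty closed subsets of the compact set `P(λ)` and decrease as `ν` grows, so they have
a common point `x`. Then `P*(x)` contains `[λ, σ_P(λ))`, and it is closed because `A` and
`b` are continuous in `ω`, so it contains `[λ, σ_P(λ)]` as well.
-/

open Set Matrix

theorem Icc_subset_of_Ico_subset {α : Type*} [TopologicalSpace α] [LinearOrder α]
    [OrderTopology α] [DenselyOrdered α] {a b : α} {s : Set α} (hs : IsClosed s) (ha : a ∈ s)
    (h : Ico a b ⊆ s) : Icc a b ⊆ s := by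
  rcases lt_or_ge a b with hab | hba
  · rw [← closure_Ico hab.ne]
    exact hs.closure_subset_iff.2 h
  · rintro ω ⟨haω, hωb⟩
    obtain rfl : ω = a := le_antisymm (hωb.trans hba) haω
    exact ha

section ParametricFamily

variable {E : Type*} [TopologicalSpace E] {P : ℝ → Set E} {lam : ℝ}

theorem exists_mem_forall_Icc_of_isCompact (hcpt : IsCompact (P lam))
    (hcl : ∀ ω, IsClosed (P ω)) {U : Set ℝ} (hU : U.Nonempty)
    (hfeas : ∀ ν ∈ U, ∃ x ∈ P lam, ∀ ω ∈ Icc lam ν, x ∈ P ω) :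
    ∃ x ∈ P lam, ∀ ν ∈ U, ∀ ω ∈ Icc lam ν, x ∈ P ω := by
  obtain ⟨ν₀, hν₀⟩ := hU
  have : Nonempty U := ⟨⟨ν₀, hν₀⟩⟩
  -- the factor `P lam` keeps `K ν` compact also when `ν < lam`
  let K : U → Set E := fun ν => P lam ∩ ⋂ ω ∈ Icc lam (ν : ℝ), P ω
  have hKcl : ∀ ν, IsClosed (K ν) := fun ν =>
    (hcl lam).inter (isClosed_biInter fun ω _ => hcl ω)
  have hKanti : Antitone K := fun ν ν' hνν' =>
    inter_subset_inter_right _ (biInter_subset_biInter_left (Icc_subset_Icc_right hνν'))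
  have hKne : ∀ ν, (K ν).Nonempty := fun ν => by
    obtain ⟨x, hx, hxν⟩ := hfeas ν ν.2
    exact ⟨x, hx, mem_iInter₂.2 hxν⟩
  have hKcpt : ∀ ν, IsCompact (K ν) := fun ν =>
    hcpt.inter_right (isClosed_biInter fun ω _ => hcl ω)
  obtain ⟨x, hx⟩ := IsCompact.nonempty_iInter_of_directed_nonempty_isCompact_isClosed K
    hKanti.directed_ge hKne hKcpt hKcl
  have hxK : ∀ ν : U, x ∈ K ν := mem_iInter.1 hx
  exact ⟨x, (hxK ⟨ν₀, hν₀⟩).1, fun ν hν => mem_iInter₂.1 (hxK ⟨ν, hν⟩).2⟩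

theorem exists_Icc_csSup_subset (hcpt : IsCompact (P lam)) (hcl : ∀ ω, IsClosed (P ω))
    (hstar : ∀ x, IsClosed {ω | x ∈ P ω}) (hne : (P lam).Nonempty) {S : Set ℝ}
    (hfeas : ∀ ν ∈ S, ∃ x, Icc lam ν ⊆ {ω | x ∈ P ω}) :
    ∃ x, Icc lam (sSup ({lam} ∪ S)) ⊆ {ω | x ∈ P ω} := by
  have hlam : lam ∈ {lam} ∪ S := Or.inl rfl
  have hfeasU : ∀ ν ∈ {lam} ∪ S, ∃ x ∈ P lam, ∀ ω ∈ Icc lam ν, x ∈ P ω := by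
    rintro ν (rfl | hν)
    · obtain ⟨x, hx⟩ := hne
      exact ⟨x, hx, fun ω hω => by rwa [le_antisymm hω.2 hω.1]⟩
    · obtain ⟨x, hx⟩ := hfeas ν hν
      by_cases hlν : lam ≤ ν
      · exact ⟨x, hx ⟨le_rfl, hlν⟩, hx⟩
      · obtain ⟨y, hy⟩ := hne
        exact ⟨y, hy, fun ω hω => absurd (hω.1.trans hω.2) hlν⟩
  obtain ⟨x, -, hx⟩ :=
    exists_mem_forall_Icc_of_isCompact hcpt hcl (nonempty_of_mem hlam) hfeasU
  refine ⟨x, Icc_subset_of_Ico_subset (hstar x) (hx lam hlam lam ⟨le_rfl, le_rfl⟩) ?_⟩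
  rintro ω ⟨hlω, hωσ⟩
  obtain ⟨ν, hν, hων⟩ := exists_lt_of_lt_csSup (nonempty_of_mem hlam) hωσ
  exact hx ν hν ω ⟨hlω, hων.le⟩

end ParametricFamily

theorem sigma_attained_general (m d : ℕ) (α β : ℝ)
    (A : ℝ →ᵃ[ℝ] Matrix (Fin m) (Fin d) ℝ)
    (b : ℝ →ᵃ[ℝ] (Fin m → ℝ))
    (P : ℝ → Set (Fin d → ℝ))
    (hP : ∀ ω, P ω = {x | (A ω).mulVec x ≤ b ω})
    (hcpt : ∀ ω ∈ Set.Icc α β, IsCompact (P ω))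
    (Pstar : (Fin d → ℝ) → Set ℝ)
    (hPstar : ∀ x, Pstar x = {ω : ℝ | x ∈ P ω})
    (σ : ℝ → ℝ)
    (hσ : ∀ lam, σ lam =
      sSup ({lam} ∪ {ν ∈ Set.Icc α β | ∃ x : Fin d → ℝ, Set.Icc lam ν ⊆ Pstar x})) :
    ∀ lam ∈ Set.Icc α β,
      P lam = ∅ ∨ ∃ x : Fin d → ℝ, Set.Icc lam (σ lam) ⊆ Pstar x := by
  intro lam hlam
  obtain rfl : P = fun ω => {x | A ω *ᵥ x ≤ b ω} := funext hP
  obtain rfl : Pstar = fun x => {ω | A ω *ᵥ x ≤ b ω} := funext hPstar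
  obtain rfl := funext hσ
  rw [or_iff_not_imp_left, ← ne_eq, ← nonempty_iff_ne_empty]
  intro hne
  have hA : Continuous A :=
    AffineMap.continuous_linear_iff.1 (LinearMap.continuous_of_finiteDimensional _)
  have hb : Continuous b :=
    AffineMap.continuous_linear_iff.1 (LinearMap.continuous_of_finiteDimensional _)
  exact exists_Icc_csSup_subset (hcpt lam hlam)
    (fun ω => isClosed_le (continuous_const.matrix_mulVec continuous_id) continuous_const)
    (fun x => isClosed_le (hA.matrix_mulVec continuous_const) hb) hne (fun ν hν => hν.2)

/-- For an affine family of polytopes over `[α,β]`, the supremum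
defining `σ_P(λ)` is attained: either `P(λ)` is empty, or some point `x`
hits `P(ω)` for every `ω ∈ [λ, σ_P(λ)]`. -/
theorem sigma_attained (m d : ℕ) (α β : ℝ) (hαβ : α ≤ β)
    (A : ℝ →ᵃ[ℝ] Matrix (Fin m) (Fin d) ℝ)
    (b : ℝ →ᵃ[ℝ] (Fin m → ℝ))
    (P : ℝ → Set (Fin d → ℝ))
    (hP : ∀ ω, P ω = {x | (A ω).mulVec x ≤ b ω})
    (hcpt : ∀ ω ∈ Set.Icc α β, IsCompact (P ω))
    (Pstar : (Fin d → ℝ) → Set ℝ)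
    (hPstar : ∀ x, Pstar x = {ω : ℝ | x ∈ P ω})
    (σ : ℝ → ℝ)
    (hσ : ∀ lam, σ lam =
      sSup ({lam} ∪ {ν ∈ Set.Icc α β | ∃ x : Fin d → ℝ, Set.Icc lam ν ⊆ Pstar x})) :
    ∀ lam ∈ Set.Icc α β,
      P lam = ∅ ∨ ∃ x : Fin d → ℝ, Set.Icc lam (σ lam) ⊆ Pstar x :=
  sigma_attained_general m d α β A b P hP hcpt Pstar hPstar σ hσ
end
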